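/- arXiv:1312.2774 — 3 statements merged into one kernel-verified Lean document; each statement's English description precedes it below -/
import Mathlib

section
/- Let ψ be a smooth real-valued function, nowhere zero on an open set Ω ⊆ ℝ^N, satisfying −Δψ(x) = c ψ(x)/|x|^2 on Ω ⊆ ℝ^N \ {0} for some constant c. Then for every u ∈ C_0^∞(Ω), c ∫_Ω |u|^2/|x|^2 dx ≤ ∫_Ω |∇u|^2 dx. -/
open MeasureTheory Real Metric

noncomputable section

/-- Euclidean Laplacian `Δ f = ∑ᵢ ∂²f/∂xᵢ²` on `ℝ^N`. -/
def lap {N : ℕ} {F : Type} [NormedAddCommGroup F] [NormedSpace ℝ F]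
    (f : EuclideanSpace ℝ (Fin N) → F) (x : EuclideanSpace ℝ (Fin N)) : F :=
  ∑ i : Fin N, fderiv ℝ (fun y => fderiv ℝ f y (EuclideanSpace.single i 1)) x
    (EuclideanSpace.single i 1)

/-- Squared norm of the gradient: `‖∇f(x)‖² = ∑ᵢ ‖∂f/∂xᵢ(x)‖²`. -/
def gradSq {N : ℕ} {F : Type} [NormedAddCommGroup F] [NormedSpace ℝ F]
    (f : EuclideanSpace ℝ (Fin N) → F) (x : EuclideanSpace ℝ (Fin N)) : ℝ :=
  ∑ i : Fin N, ‖fderiv ℝ f x (EuclideanSpace.single i 1)‖ ^ 2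

/-- `P : ℝ^N → ℝ`, viewed via its restriction to the unit sphere `S^{N-1}`, is an
eigenfunction of the negative Laplace-Beltrami operator `-Δ_{S^{N-1}}` with eigenvalue
`λ_ℓ = ℓ(N-2+ℓ)`.  This is characterized by the smoothness and harmonicity on `ℝ^N \ {0}`
of the degree-`ℓ` homogeneous extension `x ↦ ‖x‖^ℓ P(x/‖x‖)`. -/
def IsSphEigen (N ℓ : ℕ) (P : EuclideanSpace ℝ (Fin N) → ℝ) : Prop :=
  ContDiffOn ℝ (⊤ : ℕ∞) (fun x : EuclideanSpace ℝ (Fin N) => ‖x‖ ^ ℓ * P (‖x‖⁻¹ • x)) {0}ᶜ ∧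
  ∀ x : EuclideanSpace ℝ (Fin N), x ≠ 0 →
    lap (fun y : EuclideanSpace ℝ (Fin N) => ‖y‖ ^ ℓ * P (‖y‖⁻¹ • y)) x = 0

/-- `P` is not identically zero on the unit sphere. -/
def SphNonzero (N : ℕ) (P : EuclideanSpace ℝ (Fin N) → ℝ) : Prop :=
  ∃ ω : EuclideanSpace ℝ (Fin N), ‖ω‖ = 1 ∧ P ω ≠ 0

/-- `F_P`: the cone over the zero set of `P` on the sphere, together with the origin. -/
def conicZeroSet (N : ℕ) (P : EuclideanSpace ℝ (Fin N) → ℝ) : Set (EuclideanSpace ℝ (Fin N)) :=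
  {x : EuclideanSpace ℝ (Fin N) | x ≠ 0 ∧ P (‖x‖⁻¹ • x) = 0} ∪ {0}

/-- `P` has unit `L²` norm on the unit sphere (with its surface measure). -/
def SphNormalized (N : ℕ) (P : EuclideanSpace ℝ (Fin N) → ℝ) : Prop :=
  ∫ ω : sphere (0 : EuclideanSpace ℝ (Fin N)) 1, (P ω.1) ^ 2
    ∂((volume : Measure (EuclideanSpace ℝ (Fin N))).toSphere) = 1

/-- The function `u_m(x) = m^{-1/2} φ(log‖x‖/m) ‖x‖^{-N/2+1} P(x/‖x‖)`. -/
def uFam (N : ℕ) (P : EuclideanSpace ℝ (Fin N) → ℝ) (φ : ℝ → ℝ) (m : ℕ)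
    (x : EuclideanSpace ℝ (Fin N)) : ℝ :=
  (m : ℝ) ^ (-(1 : ℝ)/2) * φ (Real.log ‖x‖ / m) * ‖x‖ ^ (-(N : ℝ)/2 + 1) * P (‖x‖⁻¹ • x)

lemma glue_contDiff {N : ℕ} {F : Type*} [NormedAddCommGroup F] [NormedSpace ℝ F]
    {f : EuclideanSpace ℝ (Fin N) → F} {Ω s : Set (EuclideanSpace ℝ (Fin N))}
    (hΩ : IsOpen Ω) (hs : IsClosed s) (hsΩ : s ⊆ Ω)
    (h1 : ContDiffOn ℝ (⊤ : ℕ∞) f Ω) (h0 : ∀ x ∉ s, f x = 0) : ContDiff ℝ (⊤ : ℕ∞) f := by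
  rw [contDiff_iff_contDiffAt]
  intro x
  by_cases hx : x ∈ Ω
  · exact h1.contDiffAt (hΩ.mem_nhds hx)
  · have hxs : x ∈ sᶜ := fun h => hx (hsΩ h)
    have : f =ᶠ[nhds x] 0 := by
      filter_upwards [hs.isOpen_compl.mem_nhds hxs] with y hy using h0 y hy
    exact (contDiffAt_const (c := 0)).congr_of_eventuallyEq this

lemma fderiv_zero_outside {N : ℕ} {F : Type*} [NormedAddCommGroup F] [NormedSpace ℝ F]
    {f : EuclideanSpace ℝ (Fin N) → F} {s : Set (EuclideanSpace ℝ (Fin N))}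
    (hs : IsClosed s) (h0 : ∀ x ∉ s, f x = 0) {x : EuclideanSpace ℝ (Fin N)} (hx : x ∉ s) :
    fderiv ℝ f x = 0 := by
  have : f =ᶠ[nhds x] 0 := by
    filter_upwards [hs.isOpen_compl.mem_nhds hx] with y hy using h0 y hy
  rw [this.fderiv_eq]
  exact fderiv_const_apply 0

lemma integral_dderiv_eq_zero {N : ℕ} {W : EuclideanSpace ℝ (Fin N) → ℝ}
    (hW : ContDiff ℝ (⊤ : ℕ∞) W) (hcs : HasCompactSupport W) (v : EuclideanSpace ℝ (Fin N)) :
    ∫ x, fderiv ℝ W x v = 0 := by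
  have h := integral_mul_fderiv_eq_neg_fderiv_mul_of_integrable
    (μ := (volume : Measure (EuclideanSpace ℝ (Fin N)))) (f := fun _ => (1:ℝ)) (g := W) (v := v)
    ?_ ?_ ?_ (fun x _ => differentiableAt_const (1:ℝ)) (fun x _ => hW.differentiable (by simp) x)
  · simpa [fderiv_fun_const] using h
  · simp [fderiv_fun_const]
  · simpa using ((hW.continuous_fderiv (by simp)).clm_apply continuous_const).integrable_of_hasCompactSupport
      (((hcs.fderiv (𝕜 := ℝ))).comp_left (g := fun L : _ →L[ℝ] ℝ => L v) rfl)
  · simpa using hW.continuous.integrable_of_hasCompactSupport hcs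

lemma hcs_of_zero_outside {N : ℕ} {f g : EuclideanSpace ℝ (Fin N) → ℝ}
    (hf : HasCompactSupport f) (h : ∀ x ∉ tsupport f, g x = 0) : HasCompactSupport g := by
  have hsub : Function.support g ⊆ tsupport f := fun x hx => by
    by_contra hxf; exact hx (h x hxf)
  exact IsCompact.of_isClosed_subset hf (isClosed_tsupport g)
    (closure_minimal hsub (isClosed_tsupport f))

lemma main_real (N : ℕ) (Ω : Set (EuclideanSpace ℝ (Fin N))) (hΩ : IsOpen Ω)
    (hΩ0 : Ω ⊆ ({0}ᶜ : Set (EuclideanSpace ℝ (Fin N))))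
    (ψ : EuclideanSpace ℝ (Fin N) → ℝ) (hψ : ContDiffOn ℝ (⊤ : ℕ∞) ψ Ω)
    (hψ0 : ∀ x ∈ Ω, ψ x ≠ 0) (c : ℝ)
    (hΔ : ∀ x ∈ Ω, -lap ψ x = c * ψ x / ‖x‖ ^ 2)
    (f : EuclideanSpace ℝ (Fin N) → ℝ) (hf : ContDiff ℝ (⊤ : ℕ∞) f)
    (hcs : HasCompactSupport f) (hsupp : tsupport f ⊆ Ω) :
    c * ∫ x in Ω, f x ^ 2 / ‖x‖ ^ 2 ≤ ∫ x in Ω, gradSq f x := by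
  classical
  set e : Fin N → EuclideanSpace ℝ (Fin N) := fun i => EuclideanSpace.single i 1 with he
  set v : EuclideanSpace ℝ (Fin N) → ℝ := fun x => f x / ψ x with hv_def
  set W : Fin N → EuclideanSpace ℝ (Fin N) → ℝ :=
    fun i x => ψ x * fderiv ℝ ψ x (e i) * v x ^ 2 with hW_def
  set A : EuclideanSpace ℝ (Fin N) → ℝ :=
    fun x => ∑ i, (ψ x * fderiv ℝ v x (e i)) ^ 2 with hA_def
  set B : Fin N → EuclideanSpace ℝ (Fin N) → ℝ := fun i x => fderiv ℝ (W i) x (e i) with hB_def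
  set C : EuclideanSpace ℝ (Fin N) → ℝ := fun x => c * (f x ^ 2 / ‖x‖ ^ 2) with hC_def
  -- vanishing outside the support
  have hf0 : ∀ x ∉ tsupport f, f x = 0 := fun x hx => image_eq_zero_of_notMem_tsupport hx
  have hv0 : ∀ x ∉ tsupport f, v x = 0 := fun x hx => by simp [hv_def, hf0 x hx]
  have hW0 : ∀ i, ∀ x ∉ tsupport f, W i x = 0 := fun i x hx => by simp [hW_def, hv0 x hx]
  have hdv0 : ∀ x ∉ tsupport f, fderiv ℝ v x = 0 :=
    fun x hx => fderiv_zero_outside (isClosed_tsupport f) hv0 hx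
  have hA0 : ∀ x ∉ tsupport f, A x = 0 := fun x hx => by simp [hA_def, hdv0 x hx]
  have hB0 : ∀ i, ∀ x ∉ tsupport f, B i x = 0 := fun i x hx => by
    simp [hB_def, fderiv_zero_outside (isClosed_tsupport f) (hW0 i) hx]
  have hC0 : ∀ x ∉ tsupport f, C x = 0 := fun x hx => by simp [hC_def, hf0 x hx]
  -- smoothness
  have hψ' : ContDiffOn ℝ (⊤ : ℕ∞) (fderiv ℝ ψ) Ω := hψ.fderiv_of_isOpen hΩ (by simp)
  have hψ'i : ∀ i, ContDiffOn ℝ (⊤ : ℕ∞) (fun x => fderiv ℝ ψ x (e i)) Ω :=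
    fun i => hψ'.clm_apply contDiffOn_const
  have hv : ContDiffOn ℝ (⊤ : ℕ∞) v Ω := hf.contDiffOn.div hψ hψ0
  have hv' : ContDiffOn ℝ (⊤ : ℕ∞) (fderiv ℝ v) Ω := hv.fderiv_of_isOpen hΩ (by simp)
  have hWsm : ∀ i, ContDiff ℝ (⊤ : ℕ∞) (W i) := fun i =>
    glue_contDiff hΩ (isClosed_tsupport f) hsupp
      ((hψ.mul (hψ'i i)).mul (hv.pow 2)) (hW0 i)
  have hWcs : ∀ i, HasCompactSupport (W i) := fun i => hcs_of_zero_outside hcs (hW0 i)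
  have hAsm : ContDiff ℝ (⊤ : ℕ∞) A :=
    glue_contDiff hΩ (isClosed_tsupport f) hsupp
      (ContDiffOn.sum fun i _ => ((hψ.mul (hv'.clm_apply contDiffOn_const)).pow 2)) hA0
  have hAcs : HasCompactSupport A := hcs_of_zero_outside hcs hA0
  have hCsm : ContDiff ℝ (⊤ : ℕ∞) C := by
    apply glue_contDiff hΩ (isClosed_tsupport f) hsupp ?_ hC0
    apply ContDiffOn.mul contDiffOn_const
    apply ContDiffOn.div (hf.contDiffOn.pow 2) ((contDiff_norm_sq ℝ).contDiffOn)
    intro x hx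
    have : x ≠ 0 := hΩ0 hx
    exact pow_ne_zero _ (norm_ne_zero_iff.2 this)
  have hCcs : HasCompactSupport C := hcs_of_zero_outside hcs hC0
  have hBcont : ∀ i, Continuous (B i) := fun i =>
    ((hWsm i).continuous_fderiv (by simp)).clm_apply continuous_const
  have hBcs : ∀ i, HasCompactSupport (B i) := fun i => hcs_of_zero_outside hcs (hB0 i)
  -- pointwise identity on Ω
  have key : ∀ x ∈ Ω, gradSq f x = A x + (∑ i, B i x) + C x := by
    intro x hx
    have hψx : ContDiffAt ℝ (⊤ : ℕ∞) ψ x := hψ.contDiffAt (hΩ.mem_nhds hx)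
    have dψ : DifferentiableAt ℝ ψ x := hψx.differentiableAt (by simp)
    have dψ'c : ContDiffAt ℝ (⊤ : ℕ∞) (fderiv ℝ ψ) x := hψx.fderiv_right (by simp)
    have dψ' : ∀ i, DifferentiableAt ℝ (fun y => fderiv ℝ ψ y (e i)) x := fun i =>
      (dψ'c.differentiableAt (by simp)).clm_apply (differentiableAt_const _)
    have df : DifferentiableAt ℝ f x := hf.differentiable (by simp) x
    have dv : DifferentiableAt ℝ v x := ((hv.differentiableOn (by simp)).differentiableAt (hΩ.mem_nhds hx))
    have hfeq : f =ᶠ[nhds x] fun y => ψ y * v y := by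
      filter_upwards [hΩ.mem_nhds hx] with y hy
      simp only [hv_def]; field_simp [hψ0 y hy]
    have h1 : ∀ i, fderiv ℝ f x (e i) = ψ x * fderiv ℝ v x (e i) + v x * fderiv ℝ ψ x (e i) := by
      intro i
      rw [hfeq.fderiv_eq, fderiv_fun_mul dψ dv]
      simp [mul_comm]
    have h2 : ∀ i, B i x = fderiv ℝ ψ x (e i) ^ 2 * v x ^ 2
        + ψ x * (fderiv ℝ (fun y => fderiv ℝ ψ y (e i)) x (e i)) * v x ^ 2
        + ψ x * fderiv ℝ ψ x (e i) * (2 * v x * fderiv ℝ v x (e i)) := by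
      intro i
      have hsqeq : (fun y => v y ^ 2) = fun y => v y * v y := funext fun y => by ring
      have dvsq : DifferentiableAt ℝ (fun y => v y ^ 2) x := by rw [hsqeq]; exact dv.mul dv
      have hdvsq : fderiv ℝ (fun y => v y ^ 2) x (e i) = 2 * v x * fderiv ℝ v x (e i) := by
        rw [hsqeq, fderiv_fun_mul dv dv]; simp; ring
      have : fderiv ℝ (W i) x (e i)
          = (ψ x * fderiv ℝ ψ x (e i)) * fderiv ℝ (fun y => v y ^ 2) x (e i)
            + v x ^ 2 * fderiv ℝ (fun y => ψ y * fderiv ℝ ψ y (e i)) x (e i) := by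
        rw [hW_def]
        beta_reduce
        rw [fderiv_fun_mul (c := fun y => ψ y * fderiv ℝ ψ y (e i)) (dψ.mul (dψ' i)) dvsq]
        simp
      rw [hB_def]
      simp only
      rw [this, hdvsq, fderiv_fun_mul dψ (dψ' i)]
      simp
      ring
    have h3 : C x = -lap ψ x * ψ x * v x ^ 2 := by
      have hx0 : x ≠ 0 := hΩ0 hx
      have hnx : ‖x‖ ≠ 0 := by simpa using hx0
      have hfx : f x = ψ x * v x := by simp only [hv_def]; field_simp [hψ0 x hx]
      rw [hΔ x hx, hC_def]
      simp only
      rw [hfx]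
      field_simp
    have hlap : lap ψ x = ∑ i, fderiv ℝ (fun y => fderiv ℝ ψ y (e i)) x (e i) := rfl
    rw [h3, hlap]
    simp only [gradSq, hA_def]
    have hei : ∀ i : Fin N, EuclideanSpace.single i (1:ℝ) = e i := fun i => rfl
    simp only [hei]
    have perterm : ∀ i : Fin N,
        ‖fderiv ℝ f x (e i)‖ ^ 2 = (ψ x * fderiv ℝ v x (e i)) ^ 2 + B i x
          + (-(fderiv ℝ (fun y => fderiv ℝ ψ y (e i)) x (e i)) * (ψ x * v x ^ 2)) := by
      intro i
      rw [Real.norm_eq_abs, sq_abs, h1 i, h2 i]; ring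
    rw [Finset.sum_congr rfl fun i _ => perterm i]
    rw [Finset.sum_add_distrib, Finset.sum_add_distrib]
    congr 1
    rw [← Finset.sum_mul]
    rw [← Finset.sum_neg_distrib]
    ring
  -- integrability
  have hIA : IntegrableOn A Ω := (hAsm.continuous.integrable_of_hasCompactSupport hAcs).integrableOn
  have hIB : ∀ i, Integrable (B i) := fun i =>
    (hBcont i).integrable_of_hasCompactSupport (hBcs i)
  have hIBsum : IntegrableOn (fun x => ∑ i, B i x) Ω :=
    (integrable_finset_sum _ fun i _ => hIB i).integrableOn
  have hIC : IntegrableOn C Ω := (hCsm.continuous.integrable_of_hasCompactSupport hCcs).integrableOn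
  have hgrad : ∫ x in Ω, gradSq f x
      = (∫ x in Ω, A x) + (∫ x in Ω, (∑ i, B i x)) + ∫ x in Ω, C x := by
    have h12 : IntegrableOn (fun x => A x + ∑ i, B i x) Ω := hIA.add hIBsum
    rw [setIntegral_congr_fun hΩ.measurableSet (fun x hx => key x hx),
      integral_add h12 hIC, integral_add hIA hIBsum]
  have hAnn : 0 ≤ ∫ x in Ω, A x :=
    setIntegral_nonneg hΩ.measurableSet fun x _ => Finset.sum_nonneg fun i _ => sq_nonneg _
  have hBzero : ∫ x in Ω, (∑ i, B i x) = 0 := by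
    have h0 : ∀ x ∉ Ω, (∑ i, B i x) = 0 := fun x hx =>
      Finset.sum_eq_zero fun i _ => hB0 i x (fun h => hx (hsupp h))
    rw [setIntegral_eq_integral_of_forall_compl_eq_zero h0,
      integral_finset_sum _ fun i _ => (hIB i)]
    exact Finset.sum_eq_zero fun i _ => integral_dderiv_eq_zero (hWsm i) (hWcs i) (e i)
  have hCeq : ∫ x in Ω, C x = c * ∫ x in Ω, f x ^ 2 / ‖x‖ ^ 2 := by
    simp only [hC_def]
    exact integral_const_mul c _
  linarith

theorem stmt4 (N : ℕ) (Ω : Set (EuclideanSpace ℝ (Fin N))) (hΩ : IsOpen Ω)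
    (hΩ0 : Ω ⊆ ({0}ᶜ : Set (EuclideanSpace ℝ (Fin N))))
    (ψ : EuclideanSpace ℝ (Fin N) → ℝ) (hψ : ContDiffOn ℝ (⊤ : ℕ∞) ψ Ω)
    (hψ0 : ∀ x ∈ Ω, ψ x ≠ 0) (c : ℝ)
    (hΔ : ∀ x ∈ Ω, -lap ψ x = c * ψ x / ‖x‖ ^ 2)
    (u : EuclideanSpace ℝ (Fin N) → ℂ) (hu : ContDiff ℝ (⊤ : ℕ∞) u)
    (hcs : HasCompactSupport u) (hsupp : tsupport u ⊆ Ω) :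
    c * ∫ x in Ω, ‖u x‖ ^ 2 / ‖x‖ ^ 2 ≤ ∫ x in Ω, gradSq u x := by
  classical
  set e : Fin N → EuclideanSpace ℝ (Fin N) := fun i => EuclideanSpace.single i 1 with he
  set f₁ : EuclideanSpace ℝ (Fin N) → ℝ := fun x => (u x).re with hf1_def
  set f₂ : EuclideanSpace ℝ (Fin N) → ℝ := fun x => (u x).im with hf2_def
  have hf₁ : ContDiff ℝ (⊤ : ℕ∞) f₁ := Complex.reCLM.contDiff.comp hu
  have hf₂ : ContDiff ℝ (⊤ : ℕ∞) f₂ := Complex.imCLM.contDiff.comp hu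
  have hcs₁ : HasCompactSupport f₁ := hcs.comp_left (g := Complex.re) rfl
  have hcs₂ : HasCompactSupport f₂ := hcs.comp_left (g := Complex.im) rfl
  have hts₁ : tsupport f₁ ⊆ Ω := by
    refine subset_trans (closure_minimal ?_ (isClosed_tsupport u)) hsupp
    exact fun x hx => subset_closure (fun h0 => hx (show f₁ x = 0 by simp [hf1_def, h0]))
  have hts₂ : tsupport f₂ ⊆ Ω := by
    refine subset_trans (closure_minimal ?_ (isClosed_tsupport u)) hsupp
    exact fun x hx => subset_closure (fun h0 => hx (show f₂ x = 0 by simp [hf2_def, h0]))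
  have main₁ := main_real N Ω hΩ hΩ0 ψ hψ hψ0 c hΔ f₁ hf₁ hcs₁ hts₁
  have main₂ := main_real N Ω hΩ hΩ0 ψ hψ hψ0 c hΔ f₂ hf₂ hcs₂ hts₂
  have hnorm : ∀ x, ‖u x‖ ^ 2 = f₁ x ^ 2 + f₂ x ^ 2 := fun x => by
    rw [hf1_def, hf2_def]
    simp only [Complex.sq_norm, Complex.normSq_apply]
    ring
  have hgradsplit : ∀ x, gradSq u x = gradSq f₁ x + gradSq f₂ x := by
    intro x
    have hdu : HasFDerivAt u (fderiv ℝ u x) x := (hu.differentiable (by simp) x).hasFDerivAt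
    have h1 : fderiv ℝ f₁ x = Complex.reCLM.comp (fderiv ℝ u x) :=
      (Complex.reCLM.hasFDerivAt.comp x hdu).fderiv
    have h2 : fderiv ℝ f₂ x = Complex.imCLM.comp (fderiv ℝ u x) :=
      (Complex.imCLM.hasFDerivAt.comp x hdu).fderiv
    simp only [gradSq, h1, h2]
    rw [← Finset.sum_add_distrib]
    refine Finset.sum_congr rfl fun i _ => ?_
    rw [ContinuousLinearMap.comp_apply, ContinuousLinearMap.comp_apply]
    simp only [Complex.reCLM_apply, Complex.imCLM_apply, Real.norm_eq_abs, sq_abs]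
    rw [Complex.sq_norm, Complex.normSq_apply]
    ring
  -- integrability
  have hnsq : ∀ x ∈ Ω, ‖x‖ ^ 2 ≠ 0 := fun x hx =>
    pow_ne_zero _ (norm_ne_zero_iff.2 (hΩ0 hx))
  have hg₁ : Continuous (fun x => f₁ x ^ 2 / ‖x‖ ^ 2) := by
    refine (glue_contDiff hΩ (isClosed_tsupport f₁) hts₁
      (((hf₁.contDiffOn.pow 2).div ((contDiff_norm_sq ℝ).contDiffOn) hnsq)) ?_).continuous
    intro x hx
    have h0 : f₁ x = 0 := image_eq_zero_of_notMem_tsupport hx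
    simp [Pi.div_apply, Pi.pow_apply, h0]
  have hg₂ : Continuous (fun x => f₂ x ^ 2 / ‖x‖ ^ 2) := by
    refine (glue_contDiff hΩ (isClosed_tsupport f₂) hts₂
      (((hf₂.contDiffOn.pow 2).div ((contDiff_norm_sq ℝ).contDiffOn) hnsq)) ?_).continuous
    intro x hx
    have h0 : f₂ x = 0 := image_eq_zero_of_notMem_tsupport hx
    simp [Pi.div_apply, Pi.pow_apply, h0]
  have hIg₁ : IntegrableOn (fun x => f₁ x ^ 2 / ‖x‖ ^ 2) Ω :=
    (hg₁.integrable_of_hasCompactSupport (hcs_of_zero_outside hcs₁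
      (fun x hx => by
        have h0 : f₁ x = 0 := image_eq_zero_of_notMem_tsupport hx
        simp [h0]))).integrableOn
  have hIg₂ : IntegrableOn (fun x => f₂ x ^ 2 / ‖x‖ ^ 2) Ω :=
    (hg₂.integrable_of_hasCompactSupport (hcs_of_zero_outside hcs₂
      (fun x hx => by
        have h0 : f₂ x = 0 := image_eq_zero_of_notMem_tsupport hx
        simp [h0]))).integrableOn
  have hgradcont : ∀ (g : EuclideanSpace ℝ (Fin N) → ℝ), ContDiff ℝ (⊤ : ℕ∞) g → Continuous (gradSq g) := by
    intro g hg
    exact continuous_finset_sum _ fun i _ =>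
      (((hg.continuous_fderiv (by simp)).clm_apply continuous_const).norm.pow 2)
  have hgradcs : ∀ (g : EuclideanSpace ℝ (Fin N) → ℝ), HasCompactSupport g → HasCompactSupport (gradSq g) := by
    intro g hg
    refine hcs_of_zero_outside hg (fun x hx => ?_)
    simp [gradSq, fderiv_zero_outside (isClosed_tsupport g)
      (fun y hy => image_eq_zero_of_notMem_tsupport hy) hx]
  have hIgr₁ : IntegrableOn (gradSq f₁) Ω :=
    ((hgradcont f₁ hf₁).integrable_of_hasCompactSupport (hgradcs f₁ hcs₁)).integrableOn
  have hIgr₂ : IntegrableOn (gradSq f₂) Ω :=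
    ((hgradcont f₂ hf₂).integrable_of_hasCompactSupport (hgradcs f₂ hcs₂)).integrableOn
  have e1 : ∫ x in Ω, ‖u x‖ ^ 2 / ‖x‖ ^ 2
      = (∫ x in Ω, f₁ x ^ 2 / ‖x‖ ^ 2) + ∫ x in Ω, f₂ x ^ 2 / ‖x‖ ^ 2 := by
    rw [setIntegral_congr_fun hΩ.measurableSet
      (fun x _ => by
        show ‖u x‖ ^ 2 / ‖x‖ ^ 2 = f₁ x ^ 2 / ‖x‖ ^ 2 + f₂ x ^ 2 / ‖x‖ ^ 2
        rw [hnorm x, add_div] :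
        Set.EqOn (fun x => ‖u x‖ ^ 2 / ‖x‖ ^ 2)
          (fun x => f₁ x ^ 2 / ‖x‖ ^ 2 + f₂ x ^ 2 / ‖x‖ ^ 2) Ω)]
    exact integral_add hIg₁ hIg₂
  have e2 : ∫ x in Ω, gradSq u x = (∫ x in Ω, gradSq f₁ x) + ∫ x in Ω, gradSq f₂ x := by
    rw [setIntegral_congr_fun hΩ.measurableSet
      (fun x _ => hgradsplit x : Set.EqOn (gradSq u) (fun x => gradSq f₁ x + gradSq f₂ x) Ω)]
    exact integral_add hIgr₁ hIgr₂
  rw [e1, e2, mul_add]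
  linarith
end
end

section
/- Let N ≥ 2, k ∈ ℝ, and let P be a nonzero eigenfunction of −Δ_{S^{N−1}} with eigenvalue λ_ℓ = ℓ(N−2+ℓ) satisfying λ_ℓ ≥ −(N−2)^2/4 − k. Then for every u ∈ C_0^∞(ℝ^N \ F_P), the quadratic form ∫_{ℝ^N} |∇u|^2 dx + k ∫_{ℝ^N} |u|^2/|x|^2 dx is nonnegative. -/
open MeasureTheory Real Metric

noncomputable section

variable {N : ℕ}
local notation "E" => EuclideanSpace ℝ (Fin N)
local notation "e" i => EuclideanSpace.single i (1:ℝ)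

lemma hasFDerivAt_rpow_n2 (p : ℝ) (x : EuclideanSpace ℝ (Fin N)) (hx : x ≠ 0) :
    HasFDerivAt (fun y : EuclideanSpace ℝ (Fin N) => (‖y‖^2 : ℝ) ^ p)
      ((p * (‖x‖^2 : ℝ) ^ (p-1)) • (2 • innerSL ℝ x)) x := by
  have h1 : HasFDerivAt (fun y : E => ‖y‖^2) (2 • innerSL ℝ x) x :=
    (hasStrictFDerivAt_norm_sq x).hasFDerivAt
  have h2 : HasDerivAt (fun r : ℝ => r ^ p) (p * (‖x‖^2 : ℝ) ^ (p-1)) (‖x‖^2) :=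
    Real.hasDerivAt_rpow_const (Or.inl (by simpa using norm_pos_iff.2 hx |>.ne'))
  exact h2.comp_hasFDerivAt x h1

lemma inner_apply_single (x : EuclideanSpace ℝ (Fin N)) (i : Fin N) :
    innerSL ℝ x (EuclideanSpace.single i (1:ℝ)) = x i := by
  simp [EuclideanSpace.inner_single_right]

lemma sum_single (x : EuclideanSpace ℝ (Fin N)) :
    ∑ i, x i • EuclideanSpace.single i (1:ℝ) = x := by
  ext j
  rw [show (∑ i, x i • EuclideanSpace.single i (1:ℝ)) j = ∑ i, (x i • EuclideanSpace.single i (1:ℝ)) j from by rw [WithLp.ofLp_sum]; exact Finset.sum_apply j _ _]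
  simp [EuclideanSpace.single_apply]

lemma euler {ℓ : ℕ} {Q : EuclideanSpace ℝ (Fin N) → ℝ}
    (hhom : ∀ t : ℝ, 0 < t → ∀ y, Q (t • y) = t ^ ℓ * Q y)
    {x : EuclideanSpace ℝ (Fin N)} (hd : DifferentiableAt ℝ Q x) :
    fderiv ℝ Q x x = (ℓ : ℝ) * Q x := by
  have hc : HasDerivAt (fun t : ℝ => t • x) x 1 := by
    simpa using (hasDerivAt_id (1:ℝ)).smul_const x
  have hc' : HasDerivAt (fun t : ℝ => t • x) x 1 := hc
  have hQ : HasFDerivAt Q (fderiv ℝ Q x) ((1:ℝ) • x) := by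
    simpa using hd.hasFDerivAt
  have hcomp : HasDerivAt (fun t : ℝ => Q (t • x)) (fderiv ℝ Q x x) 1 :=
    hQ.comp_hasDerivAt 1 hc'
  have heq : (fun t : ℝ => Q (t • x)) =ᶠ[nhds 1] fun t => t ^ ℓ * Q x := by
    filter_upwards [eventually_gt_nhds one_pos] with t ht
    exact hhom t ht x
  have h2 : HasDerivAt (fun t : ℝ => t ^ ℓ * Q x) ((ℓ : ℝ) * Q x) 1 := by
    simpa using (hasDerivAt_pow ℓ (1:ℝ)).mul_const (Q x)
  exact (hcomp.congr_of_eventuallyEq heq.symm).unique h2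

lemma intDivZero (h : EuclideanSpace ℝ (Fin N) → ℝ) (hh : ContDiff ℝ 1 h)
    (hc : HasCompactSupport h) (v : EuclideanSpace ℝ (Fin N)) :
    ∫ x : EuclideanSpace ℝ (Fin N), fderiv ℝ h x v = 0 := by
  have hcont : Continuous (fun x : E => fderiv ℝ h x v) :=
    (hh.continuous_fderiv one_ne_zero).clm_apply continuous_const
  have hsupp : HasCompactSupport (fun x : E => fderiv ℝ h x v) :=
    (hc.fderiv ℝ).comp_left (g := fun L : (E →L[ℝ] ℝ) => L v) rfl
  have h1 : Integrable (fun x : E => fderiv ℝ h x v) := hcont.integrable_of_hasCompactSupport hsupp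
  have h2 : Integrable h := hh.continuous.integrable_of_hasCompactSupport hc
  have key := integral_mul_fderiv_eq_neg_fderiv_mul_of_integrable (μ := (volume : Measure E))
    (f := fun _ : E => (1:ℝ)) (g := h) (v := v) ?_ ?_ ?_ (fun x _ => (differentiable_const (1:ℝ)) x)
    (fun x _ => hh.differentiable one_ne_zero x)
  · simpa using key
  · simp
  · simpa using h1
  · simpa using h2

noncomputable def psiF (s : ℝ) (Q : EuclideanSpace ℝ (Fin N) → ℝ) :
    EuclideanSpace ℝ (Fin N) → ℝ := fun x => (‖x‖^2 : ℝ) ^ s * Q x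

noncomputable def Ff (s : ℝ) (Q : EuclideanSpace ℝ (Fin N) → ℝ) (i : Fin N) :
    EuclideanSpace ℝ (Fin N) → ℝ := fun y =>
  s * ((‖y‖^2 : ℝ) ^ (s-1) * (2 * (y i * Q y))) +
    (‖y‖^2 : ℝ) ^ s * fderiv ℝ Q y (EuclideanSpace.single i (1:ℝ))

variable {s : ℝ} {Q : EuclideanSpace ℝ (Fin N) → ℝ}

lemma diffAtQ (hQ : ContDiffOn ℝ (⊤ : ℕ∞) Q {0}ᶜ) {x : EuclideanSpace ℝ (Fin N)} (hx : x ≠ 0) :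
    DifferentiableAt ℝ Q x :=
  ((hQ.contDiffAt (isOpen_compl_singleton.mem_nhds hx)).differentiableAt (by simp))

lemma hasFDerivAt_psiF (hQ : ContDiffOn ℝ (⊤ : ℕ∞) Q {0}ᶜ) {x : EuclideanSpace ℝ (Fin N)} (hx : x ≠ 0) :
    HasFDerivAt (psiF s Q)
      (((‖x‖^2 : ℝ) ^ s) • fderiv ℝ Q x +
        (Q x) • ((s * (‖x‖^2 : ℝ) ^ (s-1)) • (2 • innerSL ℝ x))) x :=
  (hasFDerivAt_rpow_n2 s x hx).mul ((diffAtQ hQ hx).hasFDerivAt)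

lemma fderiv_psiF_apply (hQ : ContDiffOn ℝ (⊤ : ℕ∞) Q {0}ᶜ) {x : EuclideanSpace ℝ (Fin N)} (hx : x ≠ 0)
    (i : Fin N) :
    fderiv ℝ (psiF s Q) x (EuclideanSpace.single i (1:ℝ)) = Ff s Q i x := by
  rw [(hasFDerivAt_psiF hQ hx).fderiv]
  simp [Ff, inner_apply_single]
  ring

lemma diffAt_dQ (hQ : ContDiffOn ℝ (⊤ : ℕ∞) Q {0}ᶜ) {x : EuclideanSpace ℝ (Fin N)} (hx : x ≠ 0)
    (i : Fin N) :
    DifferentiableAt ℝ (fun y => fderiv ℝ Q y (EuclideanSpace.single i (1:ℝ))) x := by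
  have h1 : ContDiffAt ℝ 1 (fderiv ℝ Q) x :=
    (hQ.contDiffAt (isOpen_compl_singleton.mem_nhds hx)).fderiv_right (by exact WithTop.coe_le_coe.mpr le_top)
  exact (h1.differentiableAt one_ne_zero).clm_apply (differentiableAt_const _)

lemma hasFDerivAt_Ff (hQ : ContDiffOn ℝ (⊤ : ℕ∞) Q {0}ᶜ) {x : EuclideanSpace ℝ (Fin N)} (hx : x ≠ 0)
    (i : Fin N) :
    HasFDerivAt (Ff s Q i)
      (s • ((((‖x‖^2:ℝ) ^ (s-1)) • ((2:ℝ) • ((x i) • fderiv ℝ Q x + (Q x) • (EuclideanSpace.proj i : EuclideanSpace ℝ (Fin N) →L[ℝ] ℝ))) +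
        (2 * (x i * Q x)) • (((s-1) * (‖x‖^2 : ℝ) ^ (s-1-1)) • (2 • innerSL ℝ x)))) +
       ((((‖x‖^2:ℝ) ^ s) • fderiv ℝ (fun y => fderiv ℝ Q y (EuclideanSpace.single i (1:ℝ))) x) +
        (fderiv ℝ Q x (EuclideanSpace.single i (1:ℝ))) • ((s * (‖x‖^2 : ℝ) ^ (s-1)) • (2 • innerSL ℝ x)))) x := by
  have hQx := diffAtQ hQ hx
  have hA : HasFDerivAt (fun y : E => y i * Q y)
      ((x i) • fderiv ℝ Q x + (Q x) • (EuclideanSpace.proj i : EuclideanSpace ℝ (Fin N) →L[ℝ] ℝ)) x :=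
    (EuclideanSpace.proj i).hasFDerivAt.mul hQx.hasFDerivAt
  have hB := (hasFDerivAt_rpow_n2 (s-1) x hx).mul (hA.const_mul (2:ℝ))
  have hC := (hasFDerivAt_rpow_n2 s x hx).mul (diffAt_dQ hQ hx i).hasFDerivAt
  exact (hB.const_mul s).add hC

lemma euler_sum {ℓ : ℕ} (hQ : ContDiffOn ℝ (⊤ : ℕ∞) Q {0}ᶜ)
    (hhom : ∀ t : ℝ, 0 < t → ∀ y, Q (t • y) = t ^ ℓ * Q y)
    {x : EuclideanSpace ℝ (Fin N)} (hx : x ≠ 0) :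
    ∑ i, x i * fderiv ℝ Q x (EuclideanSpace.single i (1:ℝ)) = (ℓ : ℝ) * Q x := by
  have h := euler hhom (diffAtQ hQ hx)
  rw [← h, ← sum_single x]
  rw [map_sum]
  simp [sum_single]

lemma sum_sq (x : EuclideanSpace ℝ (Fin N)) : ∑ i, x i * x i = ‖x‖^2 := by
  rw [← real_inner_self_eq_norm_sq]
  simp [PiLp.inner_apply, RCLike.inner_apply]
  rw [EuclideanSpace.norm_eq, Real.sq_sqrt (by positivity)]
  simp [sq]

lemma lap_psiF {s : ℝ} {Q : EuclideanSpace ℝ (Fin N) → ℝ} {ℓ : ℕ} (hQ : ContDiffOn ℝ (⊤ : ℕ∞) Q {0}ᶜ)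
    (hlapQ : ∀ x : EuclideanSpace ℝ (Fin N), x ≠ 0 → lap Q x = 0)
    (hhom : ∀ t : ℝ, 0 < t → ∀ y, Q (t • y) = t ^ ℓ * Q y)
    {x : EuclideanSpace ℝ (Fin N)} (hx : x ≠ 0) :
    lap (psiF s Q) x =
      (4*s*(s-1) + 2*s*N + 4*s*ℓ) * ((‖x‖^2 : ℝ) ^ (s-1) * Q x) := by
  have hn2 : (0:ℝ) < ‖x‖^2 := pow_pos (norm_pos_iff.2 hx) 2
  set r : ℝ := ‖x‖^2 with hr
  set dQ : Fin N → ℝ := fun i => fderiv ℝ Q x (EuclideanSpace.single i (1:ℝ)) with hdQ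
  set d2 : Fin N → ℝ := fun i => fderiv ℝ (fun y => fderiv ℝ Q y (EuclideanSpace.single i (1:ℝ))) x
      (EuclideanSpace.single i (1:ℝ)) with hd2
  have key : ∀ i : Fin N,
      fderiv ℝ (fun y => fderiv ℝ (psiF s Q) y (EuclideanSpace.single i (1:ℝ))) x
        (EuclideanSpace.single i (1:ℝ)) =
      (4*s*(r ^ (s-1))) * (x i * dQ i) + (4*s*(s-1)*(Q x)*(r ^ (s-1-1))) * (x i * x i)
        + (r ^ s) * d2 i + 2*s*(Q x)*(r ^ (s-1)) := by
    intro i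
    have hev : (fun y => fderiv ℝ (psiF s Q) y (EuclideanSpace.single i (1:ℝ)))
        =ᶠ[nhds x] Ff s Q i := by
      filter_upwards [isOpen_compl_singleton.mem_nhds hx] with y hy
      exact fderiv_psiF_apply hQ hy i
    rw [hev.fderiv_eq, (hasFDerivAt_Ff hQ hx i).fderiv]
    simp [inner_apply_single, EuclideanSpace.single_apply, ← hdQ, ← hd2, ← hr]
    ring
  unfold lap
  rw [Finset.sum_congr rfl (fun i _ => key i)]
  have e1 : ∑ i, x i * dQ i = (ℓ:ℝ) * Q x := euler_sum hQ hhom hx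
  have e2 : ∑ i, x i * x i = r := sum_sq x
  have e3 : ∑ i, d2 i = 0 := hlapQ x hx
  have e4 : r ^ (s-1-1) * r = r ^ (s-1) := by
    rw [show s-1-1 = (s-1) + (-1) by ring, Real.rpow_add hn2, Real.rpow_neg_one]
    field_simp
  have e5 : r ^ s = r ^ (s-1) * r := by
    have := Real.rpow_add hn2 (s-1) 1
    rw [Real.rpow_one, show s-1+1 = s by ring] at this
    exact this
  simp only [Finset.sum_add_distrib, ← Finset.mul_sum, e1, e2, e3, Finset.sum_const,
    Finset.card_univ, Fintype.card_fin, nsmul_eq_mul, mul_zero]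
  rw [show (4*s*(s-1)*(Q x)*(r ^ (s-1-1))) * r = 4*s*(s-1)*(Q x)*(r ^ (s-1-1) * r) by ring, e4]
  ring

noncomputable def wF (s : ℝ) (Q : EuclideanSpace ℝ (Fin N) → ℝ) (i : Fin N) :
    EuclideanSpace ℝ (Fin N) → ℝ := fun y =>
  (psiF s Q y)⁻¹ * fderiv ℝ (psiF s Q) y (EuclideanSpace.single i (1:ℝ))

variable {s : ℝ} {Q : EuclideanSpace ℝ (Fin N) → ℝ}

lemma psiF_ne (hQ : ContDiffOn ℝ (⊤ : ℕ∞) Q {0}ᶜ) {x : EuclideanSpace ℝ (Fin N)} (hx : x ≠ 0)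
    (hq : Q x ≠ 0) : psiF s Q x ≠ 0 := by
  have hn2 : (0:ℝ) < ‖x‖^2 := pow_pos (norm_pos_iff.2 hx) 2
  exact mul_ne_zero (Real.rpow_pos_of_pos hn2 s).ne' hq

lemma contDiffAt_psiF (hQ : ContDiffOn ℝ (⊤ : ℕ∞) Q {0}ᶜ) {x : EuclideanSpace ℝ (Fin N)} (hx : x ≠ 0) :
    ContDiffAt ℝ (⊤ : ℕ∞) (psiF s Q) x := by
  have hn2 : (‖x‖^2 : ℝ) ≠ 0 := (pow_pos (norm_pos_iff.2 hx) 2).ne'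
  have h1 : ContDiffAt ℝ (⊤ : ℕ∞) (fun y : EuclideanSpace ℝ (Fin N) => (‖y‖^2 : ℝ) ^ s) x :=
    (Real.contDiffAt_rpow_const_of_ne hn2).comp x (contDiffAt_id.norm_sq ℝ)
  exact h1.mul (hQ.contDiffAt (isOpen_compl_singleton.mem_nhds hx))

lemma contDiffAt_Ff (hQ : ContDiffOn ℝ (⊤ : ℕ∞) Q {0}ᶜ) {x : EuclideanSpace ℝ (Fin N)} (hx : x ≠ 0)
    (i : Fin N) : ContDiffAt ℝ 1 (Ff s Q i) x := by
  have hn2 : (‖x‖^2 : ℝ) ≠ 0 := (pow_pos (norm_pos_iff.2 hx) 2).ne'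
  have hQc : ContDiffAt ℝ (⊤ : ℕ∞) Q x := hQ.contDiffAt (isOpen_compl_singleton.mem_nhds hx)
  have h1 : ContDiffAt ℝ 1 (fun y : EuclideanSpace ℝ (Fin N) => (‖y‖^2 : ℝ) ^ (s-1)) x :=
    ((Real.contDiffAt_rpow_const_of_ne hn2).comp x (contDiffAt_id.norm_sq ℝ)).of_le le_top
  have h2 : ContDiffAt ℝ 1 (fun y : EuclideanSpace ℝ (Fin N) => (‖y‖^2 : ℝ) ^ s) x :=
    ((Real.contDiffAt_rpow_const_of_ne hn2).comp x (contDiffAt_id.norm_sq ℝ)).of_le le_top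
  have h3 : ContDiffAt ℝ 1 (fun y : EuclideanSpace ℝ (Fin N) =>
      fderiv ℝ Q y (EuclideanSpace.single i (1:ℝ))) x :=
    (hQc.fderiv_right ((by exact WithTop.coe_le_coe.mpr le_top))).clm_apply contDiffAt_const
  have h4 : ContDiffAt ℝ 1 (fun y : EuclideanSpace ℝ (Fin N) => y i) x := by
    exact ((EuclideanSpace.proj (𝕜 := ℝ) i).contDiff (n := 1)).contDiffAt
  exact ((contDiffAt_const.mul (h1.mul (contDiffAt_const.mul
    (h4.mul (hQc.of_le (by simp)))))).add (h2.mul h3))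

lemma wF_eventuallyEq (hQ : ContDiffOn ℝ (⊤ : ℕ∞) Q {0}ᶜ) {x : EuclideanSpace ℝ (Fin N)} (hx : x ≠ 0)
    (i : Fin N) :
    wF s Q i =ᶠ[nhds x] fun y => (psiF s Q y)⁻¹ * Ff s Q i y := by
  filter_upwards [isOpen_compl_singleton.mem_nhds hx] with y hy
  rw [wF, fderiv_psiF_apply hQ hy i]

lemma contDiffAt_wF (hQ : ContDiffOn ℝ (⊤ : ℕ∞) Q {0}ᶜ) {x : EuclideanSpace ℝ (Fin N)} (hx : x ≠ 0)
    (hq : Q x ≠ 0) (i : Fin N) : ContDiffAt ℝ 1 (wF s Q i) x := by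
  have h1 : ContDiffAt ℝ 1 (fun y => (psiF s Q y)⁻¹ * Ff s Q i y) x :=
    (((contDiffAt_psiF hQ hx).of_le (by simp)).inv (psiF_ne hQ hx hq)).mul (contDiffAt_Ff hQ hx i)
  exact h1.congr_of_eventuallyEq (wF_eventuallyEq hQ hx i)

lemma lap_eq_sum_Ff (hQ : ContDiffOn ℝ (⊤ : ℕ∞) Q {0}ᶜ) {x : EuclideanSpace ℝ (Fin N)} (hx : x ≠ 0) :
    lap (psiF s Q) x = ∑ i, fderiv ℝ (Ff s Q i) x (EuclideanSpace.single i (1:ℝ)) := by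
  unfold lap
  refine Finset.sum_congr rfl fun i _ => ?_
  have hev : (fun y => fderiv ℝ (psiF s Q) y (EuclideanSpace.single i (1:ℝ)))
      =ᶠ[nhds x] Ff s Q i := by
    filter_upwards [isOpen_compl_singleton.mem_nhds hx] with y hy
    exact fderiv_psiF_apply hQ hy i
  rw [hev.fderiv_eq]

lemma riccati {ℓ : ℕ} (hQ : ContDiffOn ℝ (⊤ : ℕ∞) Q {0}ᶜ)
    (hlapQ : ∀ x : EuclideanSpace ℝ (Fin N), x ≠ 0 → lap Q x = 0)
    (hhom : ∀ t : ℝ, 0 < t → ∀ y, Q (t • y) = t ^ ℓ * Q y)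
    {x : EuclideanSpace ℝ (Fin N)} (hx : x ≠ 0) (hq : Q x ≠ 0) :
    ∑ i, (fderiv ℝ (wF s Q i) x (EuclideanSpace.single i (1:ℝ)) + (wF s Q i x)^2)
      = (4*s*(s-1) + 2*s*N + 4*s*ℓ) / (‖x‖^2 : ℝ) := by
  have hn2 : (0:ℝ) < ‖x‖^2 := pow_pos (norm_pos_iff.2 hx) 2
  have hψ0 : psiF s Q x ≠ 0 := psiF_ne hQ hx hq
  have hψd : DifferentiableAt ℝ (psiF s Q) x := (hasFDerivAt_psiF hQ hx).differentiableAt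
  have key : ∀ i, fderiv ℝ (wF s Q i) x (EuclideanSpace.single i (1:ℝ)) + (wF s Q i x)^2
      = (psiF s Q x)⁻¹ * fderiv ℝ (Ff s Q i) x (EuclideanSpace.single i (1:ℝ)) := by
    intro i
    have hψF := hasFDerivAt_psiF (s := s) hQ hx
    have hinv := (hasDerivAt_inv hψ0).comp_hasFDerivAt x hψF
    have hFf := hasFDerivAt_Ff (s := s) hQ hx i
    have hprod : HasFDerivAt (fun y => (psiF s Q y)⁻¹ * Ff s Q i y) _ x := hinv.mul hFf
    rw [(wF_eventuallyEq hQ hx i).fderiv_eq, hprod.fderiv, hFf.fderiv]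
    simp only [ContinuousLinearMap.add_apply, ContinuousLinearMap.smul_apply,
      ContinuousLinearMap.neg_apply, smul_eq_mul, wF]
    rw [fderiv_psiF_apply hQ hx i]
    simp only [Ff]
    simp only [inner_apply_single, Function.comp_apply, PiLp.proj_apply, EuclideanSpace.single_apply, eq_self_iff_true, if_true, nsmul_eq_mul, Nat.cast_ofNat]
    field_simp
    ring
  rw [Finset.sum_congr rfl fun i _ => key i, ← Finset.mul_sum, ← lap_eq_sum_Ff hQ hx,
    lap_psiF hQ hlapQ hhom hx]
  have e5 : (‖x‖^2 : ℝ) ^ s = (‖x‖^2:ℝ) ^ (s-1) * ‖x‖^2 := by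
    have := Real.rpow_add hn2 (s-1) 1
    rw [Real.rpow_one, show s-1+1 = s by ring] at this
    exact this
  rw [psiF]
  rw [e5]
  field_simp

theorem stmt9 (N ℓ : ℕ) (hN : 2 ≤ N) (k : ℝ) (P : EuclideanSpace ℝ (Fin N) → ℝ)
    (hP : IsSphEigen N ℓ P) (hP0 : SphNonzero N P)
    (hk : (ℓ : ℝ) * ((N : ℝ) - 2 + ℓ) ≥ -((N : ℝ) - 2) ^ 2 / 4 - k)
    (u : EuclideanSpace ℝ (Fin N) → ℂ)
    (hu : ContDiff ℝ (⊤ : ℕ∞) u) (hcs : HasCompactSupport u)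
    (hsupp : tsupport u ⊆ (conicZeroSet N P)ᶜ) :
    0 ≤ (∫ x, gradSq u x) + k * ∫ x, ‖u x‖ ^ 2 / ‖x‖ ^ 2 := by
  classical
  set Q : EuclideanSpace ℝ (Fin N) → ℝ := fun x => ‖x‖ ^ ℓ * P (‖x‖⁻¹ • x) with hQdef
  obtain ⟨hQ, hlapQ⟩ := hP
  -- homogeneity
  have hhom : ∀ t : ℝ, 0 < t → ∀ y, Q (t • y) = t ^ ℓ * Q y := by
    intro t ht y
    have h1 : ‖t • y‖ = t * ‖y‖ := by
      rw [norm_smul, Real.norm_of_nonneg ht.le]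
    have h2 : (‖t • y‖)⁻¹ • (t • y) = ‖y‖⁻¹ • y := by
      rw [h1, smul_smul, mul_inv]
      congr 1
      rw [mul_comm t⁻¹, mul_assoc, inv_mul_cancel₀ ht.ne', mul_one]
    show ‖t • y‖ ^ ℓ * P (‖t • y‖⁻¹ • t • y) = t ^ ℓ * (‖y‖ ^ ℓ * P (‖y‖⁻¹ • y))
    rw [h2, h1, mul_pow]
    ring
  -- the exponent
  set D : ℝ := ((N:ℝ)-2)^2/4 + (ℓ:ℝ)*((N:ℝ)-2+(ℓ:ℝ)) + k with hD
  have hD0 : 0 ≤ D := by simp only [hD]; linarith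
  set s : ℝ := -(((N:ℝ)-2)/2 + Real.sqrt D + (ℓ:ℝ))/2 with hs
  have hCk : 4*s*(s-1) + 2*s*(N:ℝ) + 4*s*(ℓ:ℝ) = k := by
    have h := Real.sq_sqrt hD0
    rw [hs]
    linear_combination h + hD
  -- membership in the good open set
  have hmem : ∀ x ∈ tsupport u, x ≠ 0 ∧ Q x ≠ 0 := by
    intro x hx
    have := hsupp hx
    simp only [conicZeroSet, Set.mem_compl_iff, Set.mem_union, Set.mem_setOf_eq,
      Set.mem_singleton_iff, not_or, not_and] at this
    obtain ⟨h1, h2⟩ := this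
    refine ⟨h2, ?_⟩
    simp only [hQdef]
    exact mul_ne_zero (pow_ne_zero _ (norm_ne_zero_iff.2 h2)) (h1 h2)
  -- setup
  have hud : Differentiable ℝ u := hu.differentiable (by simp)
  set w : Fin N → EuclideanSpace ℝ (Fin N) → ℝ := fun i => wF s Q i with hwdef
  set g : Fin N → EuclideanSpace ℝ (Fin N) → ℝ :=
    fun i x => ‖u x‖^2 * w i x with hgdef
  have hρC : ContDiff ℝ (⊤ : ℕ∞) (fun x => ‖u x‖^2) := hu.norm_sq ℝ
  -- C¹ and compact support of g i
  have hgC : ∀ i, ContDiff ℝ 1 (g i) := by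
    intro i
    rw [contDiff_iff_contDiffAt]
    intro x
    by_cases hx : x ∈ tsupport u
    · obtain ⟨hx0, hq⟩ := hmem x hx
      exact ((hρC.contDiffAt).of_le (by simp)).mul (contDiffAt_wF hQ hx0 hq i)
    · have h0 : u =ᶠ[nhds x] 0 := notMem_tsupport_iff_eventuallyEq.mp hx
      have hg0 : g i =ᶠ[nhds x] 0 := by
        filter_upwards [h0] with y hy
        simp [hgdef, hy]
      exact (contDiffAt_const (c := (0:ℝ))).congr_of_eventuallyEq hg0
  have hgsupp : ∀ i, HasCompactSupport (g i) := by
    intro i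
    refine hcs.mono ?_
    intro x hx
    simp only [hgdef, Function.mem_support, ne_eq] at hx ⊢
    intro h
    exact hx (by simp [h])
  -- pointwise identity
  have hkey : ∀ x, gradSq u x + k * (‖u x‖^2 / ‖x‖^2) =
      (∑ i, ‖fderiv ℝ u x (EuclideanSpace.single i (1:ℝ)) - w i x • u x‖^2) +
        ∑ i, fderiv ℝ (g i) x (EuclideanSpace.single i (1:ℝ)) := by
    intro x
    by_cases hx : x ∈ tsupport u
    · obtain ⟨hx0, hq⟩ := hmem x hx
      have hric := riccati (s := s) hQ hlapQ hhom hx0 hq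
      rw [hCk] at hric
      have hρd : ∀ i, fderiv ℝ (fun y => ‖u y‖^2) x (EuclideanSpace.single i (1:ℝ)) =
          2 * (inner ℝ (u x) (fderiv ℝ u x (EuclideanSpace.single i (1:ℝ))) : ℝ) := by
        intro i
        rw [((hud x).hasFDerivAt.norm_sq).fderiv]
        simp
        ring
      have hgd : ∀ i, fderiv ℝ (g i) x (EuclideanSpace.single i (1:ℝ)) =
          ‖u x‖^2 * fderiv ℝ (w i) x (EuclideanSpace.single i (1:ℝ)) +
            2 * (inner ℝ (u x) (fderiv ℝ u x (EuclideanSpace.single i (1:ℝ))) : ℝ) * w i x := by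
        intro i
        have hwd : DifferentiableAt ℝ (w i) x :=
          (contDiffAt_wF hQ hx0 hq i).differentiableAt one_ne_zero
        rw [hgdef]
        rw [fderiv_fun_mul (hρC.differentiable (by simp) x) hwd]
        simp only [ContinuousLinearMap.add_apply, ContinuousLinearMap.smul_apply, smul_eq_mul]
        rw [hρd i]
        ring
      have hexp : ∀ i, ‖fderiv ℝ u x (EuclideanSpace.single i (1:ℝ)) - w i x • u x‖^2 +
          fderiv ℝ (g i) x (EuclideanSpace.single i (1:ℝ)) =
          ‖fderiv ℝ u x (EuclideanSpace.single i (1:ℝ))‖^2 +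
            ‖u x‖^2 * (fderiv ℝ (w i) x (EuclideanSpace.single i (1:ℝ)) + (w i x)^2) := by
        intro i
        rw [hgd i]
        rw [norm_sub_sq_real]
        rw [real_inner_smul_right, norm_smul]
        rw [real_inner_comm]
        simp only [Real.norm_eq_abs, mul_pow, sq_abs]
        ring
      rw [← Finset.sum_add_distrib, Finset.sum_congr rfl (fun i _ => hexp i),
        Finset.sum_add_distrib, ← Finset.mul_sum, hric]
      rw [gradSq]
      have hn2 : (‖x‖^2 : ℝ) ≠ 0 := (pow_pos (norm_pos_iff.2 hx0) 2).ne'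
      field_simp
    · have h0 : u =ᶠ[nhds x] 0 := notMem_tsupport_iff_eventuallyEq.mp hx
      have hu0 : u x = 0 := image_eq_zero_of_notMem_tsupport hx
      have hdu : fderiv ℝ u x = 0 := by
        rw [h0.fderiv_eq]
        exact fderiv_const_apply 0
      have hg0 : ∀ i, fderiv ℝ (g i) x = 0 := by
        intro i
        have hgev : g i =ᶠ[nhds x] 0 := by
          filter_upwards [h0] with y hy
          simp [hgdef, hy]
        rw [hgev.fderiv_eq]
        exact fderiv_const_apply 0
      simp only [gradSq, hdu, hu0, hg0, ContinuousLinearMap.zero_apply, smul_zero, sub_zero,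
        norm_zero]
      simp
  -- integrability
  have hgradcont : Continuous (fun x => gradSq u x) := by
    refine continuous_finset_sum _ (fun i _ => ?_)
    exact (((hu.continuous_fderiv (by simp)).clm_apply continuous_const).norm.pow 2)
  have hgradsupp : HasCompactSupport (fun x => gradSq u x) := by
    refine (hcs.fderiv ℝ).mono ?_
    intro x hx
    simp only [Function.mem_support, ne_eq] at hx ⊢
    intro h
    exact hx (by simp [gradSq, h])
  have int1 : Integrable (fun x => gradSq u x) :=
    hgradcont.integrable_of_hasCompactSupport hgradsupp
  have h0nt : (0 : EuclideanSpace ℝ (Fin N)) ∉ tsupport u := by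
    intro h
    have := hsupp h
    simp [conicZeroSet] at this
  have int2 : Integrable (fun x : EuclideanSpace ℝ (Fin N) => ‖u x‖^2 / ‖x‖^2) := by
    have hc : Continuous (fun x : EuclideanSpace ℝ (Fin N) => ‖u x‖^2 / ‖x‖^2) := by
      rw [continuous_iff_continuousAt]
      intro x
      by_cases hx : x = (0 : EuclideanSpace ℝ (Fin N))
      · subst hx
        have h0 : u =ᶠ[nhds (0 : EuclideanSpace ℝ (Fin N))] 0 :=
          notMem_tsupport_iff_eventuallyEq.mp h0nt
        have : (fun x : EuclideanSpace ℝ (Fin N) => ‖u x‖^2 / ‖x‖^2) =ᶠ[nhds 0]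
            (fun _ => (0:ℝ)) := by
          filter_upwards [h0] with y hy
          simp [hy]
        exact (continuousAt_congr this.symm).mp continuousAt_const
      · exact ((hu.continuous.norm.pow 2).continuousAt).div
          ((continuous_norm.pow 2).continuousAt) (pow_ne_zero 2 (norm_ne_zero_iff.2 hx))
    refine hc.integrable_of_hasCompactSupport (hcs.mono ?_)
    intro x hx
    simp only [Function.mem_support, ne_eq] at hx ⊢
    intro h
    exact hx (by simp [h])
  have intdiv : ∀ i, Integrable (fun x => fderiv ℝ (g i) x (EuclideanSpace.single i (1:ℝ))) := by
    intro i
    refine (((hgC i).continuous_fderiv one_ne_zero).clm_apply continuous_const).integrable_of_hasCompactSupport ?_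
    exact ((hgsupp i).fderiv ℝ).comp_left (g := fun L : (EuclideanSpace ℝ (Fin N) →L[ℝ] ℝ) =>
      L (EuclideanSpace.single i (1:ℝ))) rfl
  have hIdiv : Integrable (fun x => ∑ i, fderiv ℝ (g i) x (EuclideanSpace.single i (1:ℝ))) :=
    integrable_finset_sum _ (fun i _ => intdiv i)
  have hIf1 : Integrable (fun x => gradSq u x + k * (‖u x‖^2 / ‖x‖^2)) :=
    int1.add (int2.const_mul k)
  have hIS : Integrable (fun x =>
      ∑ i, ‖fderiv ℝ u x (EuclideanSpace.single i (1:ℝ)) - w i x • u x‖^2) := by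
    have heq : (fun x => ∑ i, ‖fderiv ℝ u x (EuclideanSpace.single i (1:ℝ)) - w i x • u x‖^2)
        = fun x => (gradSq u x + k * (‖u x‖^2 / ‖x‖^2)) -
            ∑ i, fderiv ℝ (g i) x (EuclideanSpace.single i (1:ℝ)) := by
      funext x
      rw [hkey x]
      ring
    rw [heq]
    exact hIf1.sub hIdiv
  have hdiv0 : ∫ x, (∑ i, fderiv ℝ (g i) x (EuclideanSpace.single i (1:ℝ))) = 0 := by
    rw [integral_finset_sum _ (fun i _ => intdiv i)]
    refine Finset.sum_eq_zero (fun i _ => ?_)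
    exact intDivZero (g i) (hgC i) (hgsupp i) _
  have hsplit : ∫ x, (gradSq u x + k * (‖u x‖^2 / ‖x‖^2)) =
      (∫ x, ∑ i, ‖fderiv ℝ u x (EuclideanSpace.single i (1:ℝ)) - w i x • u x‖^2) := by
    have : (fun x => gradSq u x + k * (‖u x‖^2 / ‖x‖^2)) = fun x =>
        (∑ i, ‖fderiv ℝ u x (EuclideanSpace.single i (1:ℝ)) - w i x • u x‖^2) +
          ∑ i, fderiv ℝ (g i) x (EuclideanSpace.single i (1:ℝ)) := funext hkey
    rw [this, integral_add hIS hIdiv, hdiv0, add_zero]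
  have hSnn : 0 ≤ ∫ x, ∑ i, ‖fderiv ℝ u x (EuclideanSpace.single i (1:ℝ)) - w i x • u x‖^2 :=
    integral_nonneg (fun x => Finset.sum_nonneg (fun i _ => sq_nonneg _))
  have hfin : ∫ x, (gradSq u x + k * (‖u x‖^2 / ‖x‖^2)) =
      (∫ x, gradSq u x) + k * ∫ x, ‖u x‖^2 / ‖x‖^2 := by
    rw [integral_add int1 (int2.const_mul k), integral_const_mul]
  rw [← hfin, hsplit]
  exact hSnn
end
end

section
/- Let N ≥ 2 and k ≥ −((3N−2)/2)^2. Then for every u ∈ C_0^∞(ℝ^N \ F), where F = {x ∈ ℝ^N : x_1 = 0 or x_2 = 0 or ⋯ or x_N = 0}, one has ∫_{ℝ^N} |∇u|^2 dx + k ∫_{ℝ^N} |u|^2/|x|^2 dx ≥ 0. -/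
open MeasureTheory Real Metric

noncomputable section

namespace Hardy15

variable {N : ℕ}

abbrev E (N : ℕ) := EuclideanSpace ℝ (Fin N)
def e (i : Fin N) : E N := EuclideanSpace.single i 1
def qf (x : E N) : ℝ := ∑ j, x j ^ 2
def prf (x : E N) : ℝ := ∏ j, x j
def wf (β : ℝ) (x : E N) : ℝ := qf x ^ (-β/2) * prf x
def Lf (β : ℝ) (i : Fin N) (x : E N) : ℝ := -β * x i * (qf x)⁻¹ + (x i)⁻¹
def Sset (N : ℕ) : Set (E N) := {x | ∀ i, x i ≠ 0}

lemma qf_eq_norm (x : E N) : qf x = ‖x‖ ^ 2 := by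
  rw [EuclideanSpace.norm_eq, Real.sq_sqrt (by positivity)]
  simp [qf, sq_abs]

lemma isOpen_S : IsOpen (Sset N) := by
  have : Sset N = ⋂ i, (fun x : E N => x i) ⁻¹' {0}ᶜ := by
    ext x; simp [Sset]
  rw [this]
  exact isOpen_iInter_of_finite fun i =>
    (isOpen_compl_singleton).preimage (EuclideanSpace.proj (𝕜 := ℝ) i).continuous

lemma qf_pos [NeZero N] {x : E N} (hx : x ∈ Sset N) : 0 < qf x :=
  Finset.sum_pos' (fun j _ => sq_nonneg _)
    ⟨0, Finset.mem_univ _, lt_of_le_of_ne (sq_nonneg _) (Ne.symm (pow_ne_zero 2 (hx 0)))⟩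

lemma prf_ne_zero {x : E N} (hx : x ∈ Sset N) : prf x ≠ 0 :=
  Finset.prod_ne_zero_iff.2 fun j _ => hx j

lemma wf_ne_zero [NeZero N] {β : ℝ} {x : E N} (hx : x ∈ Sset N) : wf β x ≠ 0 :=
  mul_ne_zero (Real.rpow_pos_of_pos (qf_pos hx) _).ne' (prf_ne_zero hx)

-- derivative of coordinate
lemma hasFDerivAt_coord (i : Fin N) (x : E N) :
    HasFDerivAt (fun y : E N => y i) (EuclideanSpace.proj (𝕜 := ℝ) i) x :=
  (EuclideanSpace.proj (𝕜 := ℝ) i).hasFDerivAt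

lemma hasFDerivAt_qf (x : E N) :
    HasFDerivAt (qf (N := N)) (∑ j, ((2:ℝ) * x j) • (EuclideanSpace.proj (𝕜 := ℝ) j)) x := by
  have h : ∀ j ∈ Finset.univ, HasFDerivAt (fun y : E N => y j ^ 2)
      (((2:ℝ) * x j) • (EuclideanSpace.proj (𝕜 := ℝ) j)) x := by
    intro j _
    have := (hasFDerivAt_coord j x).mul (hasFDerivAt_coord j x)
    have h2 : (fun y : E N => y j ^ 2) = fun y : E N => y j * y j := by
      funext y; ring
    rw [h2]
    refine this.congr_fderiv ?_
    ext z; simp; ring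
  exact HasFDerivAt.fun_sum h

lemma hasFDerivAt_prf (x : E N) :
    HasFDerivAt (prf (N := N))
      (∑ j, (∏ k ∈ Finset.univ.erase j, x k) • (EuclideanSpace.proj (𝕜 := ℝ) j)) x := by
  have := HasFDerivAt.finset_prod (u := Finset.univ)
    (g := fun j (y : E N) => y j) (g' := fun j => EuclideanSpace.proj (𝕜 := ℝ) j)
    (fun j _ => hasFDerivAt_coord j x)
  exact this

lemma contDiff_qf : ContDiff ℝ (⊤ : ℕ∞) (qf (N := N)) :=
  ContDiff.sum fun j _ => ((EuclideanSpace.proj (𝕜 := ℝ) j).contDiff).pow 2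

lemma contDiff_prf : ContDiff ℝ (⊤ : ℕ∞) (prf (N := N)) :=
  contDiff_prod fun j _ => (EuclideanSpace.proj (𝕜 := ℝ) j).contDiff

end Hardy15

namespace Hardy15
variable {N : ℕ}

@[simp] lemma e_apply (i j : Fin N) : e i j = if j = i then 1 else 0 := by
  simp [e, EuclideanSpace.single_apply]

lemma hasFDerivAt_wf [NeZero N] (β : ℝ) {x : E N} (hx : x ∈ Sset N) :
    ∃ D : E N →L[ℝ] ℝ, HasFDerivAt (wf β) D x ∧ ∀ i, D (e i) = wf β x * Lf β i x := by
  have hq0 := (qf_pos hx).ne'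
  have hg := (hasFDerivAt_qf x).rpow_const (p := -β/2) (Or.inl hq0)
  have hw := hg.mul (hasFDerivAt_prf x)
  refine ⟨_, hw, fun i => ?_⟩
  have h3 : (∏ k ∈ Finset.univ.erase i, x k) * x i = prf x :=
    Finset.prod_erase_mul _ _ (Finset.mem_univ i)
  have h4 : qf x ^ (-β/2 - 1) = qf x ^ (-β/2) / qf x := by
    rw [Real.rpow_sub (qf_pos hx), Real.rpow_one]
  have h5 : (∏ k ∈ Finset.univ.erase i, x k) = prf x / x i := by
    field_simp [hx i, ← h3]
    exact h3
  simp only [ContinuousLinearMap.add_apply, ContinuousLinearMap.smul_apply,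
    ContinuousLinearMap.sum_apply, smul_eq_mul]
  simp only [PiLp.proj_apply, e_apply, mul_ite, mul_one, mul_zero,
    Finset.sum_ite_eq', Finset.mem_univ, if_true]
  rw [h4, h5, wf, Lf]
  field_simp
  ring

lemma hasFDerivAt_Lf [NeZero N] (β : ℝ) (i : Fin N) {x : E N} (hx : x ∈ Sset N) :
    ∃ D : E N →L[ℝ] ℝ, HasFDerivAt (Lf β i) D x ∧
      D (e i) = β * (2 * x i ^ 2 - qf x) / qf x ^ 2 - (x i ^ 2)⁻¹ := by
  have hq0 := (qf_pos hx).ne'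
  have hinvq : HasFDerivAt (fun y : E N => (qf y)⁻¹)
      ((-(qf x ^ 2)⁻¹) • (∑ j, ((2:ℝ) * x j) • (EuclideanSpace.proj (𝕜 := ℝ) j))) x :=
    (hasDerivAt_inv hq0).comp_hasFDerivAt x (hasFDerivAt_qf x)
  have hinvi : HasFDerivAt (fun y : E N => (y i)⁻¹)
      ((-(x i ^ 2)⁻¹) • (EuclideanSpace.proj (𝕜 := ℝ) i)) x :=
    (hasDerivAt_inv (hx i)).comp_hasFDerivAt x (hasFDerivAt_coord i x)
  have h1 := (((hasFDerivAt_coord i x).const_mul (-β)).mul hinvq).add hinvi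
  refine ⟨_, h1, ?_⟩
  simp only [ContinuousLinearMap.add_apply, ContinuousLinearMap.smul_apply,
    ContinuousLinearMap.sum_apply, smul_eq_mul]
  simp only [PiLp.proj_apply, e_apply, mul_ite, mul_one, mul_zero,
    Finset.sum_ite_eq', Finset.mem_univ, if_true]
  field_simp
  ring

lemma contDiffAt_wf [NeZero N] (β : ℝ) {x : E N} (hx : x ∈ Sset N) :
    ContDiffAt ℝ (⊤ : ℕ∞) (wf β) x :=
  ((contDiff_qf.contDiffAt).rpow_const_of_ne (qf_pos hx).ne').mul contDiff_prf.contDiffAt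

lemma contDiffAt_Lf [NeZero N] (β : ℝ) (i : Fin N) {x : E N} (hx : x ∈ Sset N) :
    ContDiffAt ℝ (⊤ : ℕ∞) (Lf β i) x := by
  have hc : ContDiffAt ℝ (⊤ : ℕ∞) (fun y : E N => y i) x :=
    (EuclideanSpace.proj (𝕜 := ℝ) i).contDiff.contDiffAt
  exact ((contDiffAt_const.mul hc).mul (contDiff_qf.contDiffAt.inv (qf_pos hx).ne')).add
    (hc.inv (hx i))

end Hardy15

namespace Hardy15
variable {N : ℕ}

lemma gradSq_eq {F : Type} [NormedAddCommGroup F] [NormedSpace ℝ F]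
    (f : E N → F) (x : E N) : gradSq f x = ∑ i, ‖fderiv ℝ f x (e i)‖ ^ 2 := rfl

lemma hcs_of_subset {α : Type*} [NormedAddCommGroup α] {g : E N → α} {f : E N → ℝ}
    (hcs : HasCompactSupport f) (h : Function.support g ⊆ tsupport f) :
    HasCompactSupport g :=
  IsCompact.of_isClosed_subset hcs (isClosed_tsupport g)
    (closure_minimal h (isClosed_tsupport f))

lemma fderiv_zero_of_zero_nhds {α : Type*} [NormedAddCommGroup α] [NormedSpace ℝ α]
    {g : E N → α} {x : E N} (h : ∀ᶠ y in nhds x, g y = 0) : fderiv ℝ g x = 0 := by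
  have h' : g =ᶠ[nhds x] (fun _ => (0 : α)) := h
  rw [h'.fderiv_eq]
  simp

lemma continuous_glue {g : E N → ℝ} {U V : Set (E N)} (hU : IsOpen U) (hV : IsOpen V)
    (hUV : ∀ x, x ∈ U ∨ x ∈ V) (hgU : ∀ x ∈ U, ContinuousAt g x)
    (hgV : ∀ y ∈ V, g y = 0) : Continuous g := by
  rw [continuous_iff_continuousAt]
  intro x
  rcases hUV x with hx | hx
  · exact hgU x hx
  · have h' : g =ᶠ[nhds x] (fun _ => (0:ℝ)) :=
      Filter.eventuallyEq_of_mem (hV.mem_nhds hx) (fun y hy => hgV y hy)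
    exact h'.continuousAt

lemma algebra_key (w0 a b q t β : ℝ) (hq : q ≠ 0) (ht : t ≠ 0) :
    (w0 * b + a * (w0 * (-β * t * q⁻¹ + t⁻¹))) ^ 2 =
    w0 ^ 2 * b ^ 2 +
        (a * a * (w0 * w0 * (β * (2 * t ^ 2 - q) / q ^ 2 - (t ^ 2)⁻¹) +
              (-β * t * q⁻¹ + t⁻¹) * (w0 * (w0 * (-β * t * q⁻¹ + t⁻¹))
                + w0 * (w0 * (-β * t * q⁻¹ + t⁻¹)))) +
          w0 * w0 * (-β * t * q⁻¹ + t⁻¹) * (a * b + a * b)) +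
      ((w0 * a) ^ 2 * (3 * β / q) - (w0 * a) ^ 2 * (β ^ 2 + 2 * β) / q ^ 2 * t ^ 2) := by
  field_simp
  ring

theorem key (N : ℕ) (hN : 2 ≤ N) (f : E N → ℝ) (hf : ContDiff ℝ (⊤ : ℕ∞) f)
    (hcs : HasCompactSupport f) (hsupp : tsupport f ⊆ Sset N) :
    ((3*(N:ℝ)-2)/2)^2 * ∫ x, f x ^ 2 / ‖x‖ ^ 2 ≤ ∫ x, gradSq f x := by
  haveI : NeZero N := ⟨by omega⟩
  set β : ℝ := (3*(N:ℝ)-2)/2 with hβ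
  clear_value β
  set T : Set (E N) := (tsupport f)ᶜ with hT
  have hT_open : IsOpen T := (isClosed_tsupport f).isOpen_compl
  have hST : ∀ x, x ∈ Sset N ∨ x ∈ T := by
    intro x
    by_cases hx : x ∈ tsupport f
    · exact Or.inl (hsupp hx)
    · exact Or.inr hx
  have hfT : ∀ y ∈ T, f y = 0 := fun y hy => image_eq_zero_of_notMem_tsupport hy
  set v : E N → ℝ := fun y => (wf β y)⁻¹ * f y with hv
  clear_value v
  have hfv : ∀ y, f y = wf β y * v y := by
    intro y
    rcases hST y with hy | hy
    · rw [hv]; simp only []; field_simp [wf_ne_zero hy]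
    · simp [hv, hfT y hy]
  have hvT : ∀ y ∈ T, v y = 0 := fun y hy => by simp [hv, hfT y hy]
  have hv_cd : ContDiff ℝ (⊤ : ℕ∞) v := by
    rw [contDiff_iff_contDiffAt]
    intro x
    rcases hST x with hx | hx
    · rw [hv]
      exact ((contDiffAt_wf β hx).inv (wf_ne_zero hx)).mul hf.contDiffAt
    · have h' : v =ᶠ[nhds x] fun _ => (0:ℝ) :=
        Filter.eventuallyEq_of_mem (hT_open.mem_nhds hx) (fun y hy => hvT y hy)
      exact (contDiffAt_const (c := (0:ℝ))).congr_of_eventuallyEq h'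
  have hv_supp : Function.support v ⊆ tsupport f := by
    intro x hx
    by_contra hxT
    exact hx (hvT x hxT)
  set X : Fin N → E N → ℝ := fun i y => (v y * v y) * ((wf β y * wf β y) * Lf β i y) with hX
  clear_value X
  have hXT : ∀ i, ∀ y ∈ T, X i y = 0 := fun i y hy => by simp [hX, hvT y hy]
  have hX_cd : ∀ i, ContDiff ℝ (⊤ : ℕ∞) (X i) := by
    intro i
    rw [contDiff_iff_contDiffAt]
    intro x
    rcases hST x with hx | hx
    · rw [hX]
      exact (hv_cd.contDiffAt.mul hv_cd.contDiffAt).mul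
        (((contDiffAt_wf β hx).mul (contDiffAt_wf β hx)).mul (contDiffAt_Lf β i hx))
    · have h' : X i =ᶠ[nhds x] fun _ => (0:ℝ) :=
        Filter.eventuallyEq_of_mem (hT_open.mem_nhds hx) (fun y hy => hXT i y hy)
      exact (contDiffAt_const (c := (0:ℝ))).congr_of_eventuallyEq h'
  -- pointwise identity
  have hkey : ∀ x, gradSq f x = wf β x ^ 2 * gradSq v x
      + (∑ i, fderiv ℝ (X i) x (e i)) + β ^ 2 * (f x ^ 2 / ‖x‖ ^ 2) := by
    intro x
    rcases hST x with hx | hx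
    · have hq0 := (qf_pos hx).ne'
      obtain ⟨Dw, hDw, hDwe⟩ := hasFDerivAt_wf (N := N) β hx
      have hvd : HasFDerivAt v (fderiv ℝ v x) x :=
        (hv_cd.differentiable (by simp) x).hasFDerivAt
      have hffun : f = fun y => wf β y * v y := funext hfv
      have hfd : HasFDerivAt f (wf β x • fderiv ℝ v x + v x • Dw) x := by
        rw [hffun]; exact hDw.mul hvd
      have hpt : ∀ i, ‖fderiv ℝ f x (e i)‖ ^ 2 = wf β x ^ 2 * ‖fderiv ℝ v x (e i)‖ ^ 2
          + fderiv ℝ (X i) x (e i)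
          + (f x ^ 2 * (3 * β / qf x) - (f x ^ 2 * (β ^ 2 + 2 * β) / qf x ^ 2) * (x i) ^ 2) := by
        intro i
        obtain ⟨DL, hDL, hDLe⟩ := hasFDerivAt_Lf (N := N) β i hx
        have hXd : HasFDerivAt (X i)
            ((v x * v x) • ((wf β x * wf β x) • DL
                + Lf β i x • (wf β x • Dw + wf β x • Dw))
              + ((wf β x * wf β x) * Lf β i x) • (v x • fderiv ℝ v x + v x • fderiv ℝ v x)) x := by
          rw [hX]
          exact (hvd.mul hvd).mul ((hDw.mul hDw).mul hDL)
        rw [hfd.fderiv, hXd.fderiv]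
        simp only [ContinuousLinearMap.add_apply, ContinuousLinearMap.smul_apply,
          smul_eq_mul, hDwe, hDLe]
        rw [Real.norm_eq_abs, sq_abs, Real.norm_eq_abs, sq_abs, hfv x]
        rw [Lf]
        exact algebra_key (wf β x) (v x) (fderiv ℝ v x (e i)) (qf x) (x i) β hq0 (hx i)
      have hsum : ∑ i, (x i) ^ 2 = qf x := rfl
      rw [gradSq_eq, gradSq_eq]
      calc (∑ i, ‖fderiv ℝ f x (e i)‖ ^ 2)
          = ∑ i, (wf β x ^ 2 * ‖fderiv ℝ v x (e i)‖ ^ 2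
              + fderiv ℝ (X i) x (e i)
              + (f x ^ 2 * (3 * β / qf x)
                  - (f x ^ 2 * (β ^ 2 + 2 * β) / qf x ^ 2) * (x i) ^ 2)) :=
            Finset.sum_congr rfl (fun i _ => hpt i)
        _ = wf β x ^ 2 * (∑ i, ‖fderiv ℝ v x (e i)‖ ^ 2)
              + (∑ i, fderiv ℝ (X i) x (e i))
              + ((N : ℝ) * (f x ^ 2 * (3 * β / qf x))
                  - (f x ^ 2 * (β ^ 2 + 2 * β) / qf x ^ 2) * qf x) := by
            have c1 : ∑ _i : Fin N, (f x ^ 2 * (3 * β / qf x))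
                = (N : ℝ) * (f x ^ 2 * (3 * β / qf x)) := by
              simp [Finset.sum_const, Finset.card_univ, nsmul_eq_mul]
            have c2 : ∑ i, (f x ^ 2 * (β ^ 2 + 2 * β) / qf x ^ 2) * (x i) ^ 2
                = (f x ^ 2 * (β ^ 2 + 2 * β) / qf x ^ 2) * qf x := by
              rw [← Finset.mul_sum, hsum]
            rw [Finset.sum_add_distrib, Finset.sum_add_distrib, ← Finset.mul_sum,
              Finset.sum_sub_distrib, c1, c2]
        _ = wf β x ^ 2 * (∑ i, ‖fderiv ℝ v x (e i)‖ ^ 2)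
              + (∑ i, fderiv ℝ (X i) x (e i)) + β ^ 2 * (f x ^ 2 / ‖x‖ ^ 2) := by
            rw [← qf_eq_norm]
            have hβ2 : 3 * β * (N : ℝ) - (β ^ 2 + 2 * β) = β ^ 2 := by rw [hβ]; ring
            field_simp
            linear_combination (f x ^ 2) * hβ2
    · have h0 : ∀ (g : E N → ℝ), (∀ y ∈ T, g y = 0) → fderiv ℝ g x = 0 := by
        intro g hg
        exact fderiv_zero_of_zero_nhds
          (Filter.eventually_of_mem (hT_open.mem_nhds hx) (fun y hy => hg y hy))
      have h1 : fderiv ℝ f x = 0 := h0 f hfT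
      have h2 : fderiv ℝ v x = 0 := h0 v hvT
      have h3 : ∀ i, fderiv ℝ (X i) x = 0 := fun i => h0 (X i) (hXT i)
      simp [gradSq_eq, h1, h2, h3, hfT x hx]
  -- auxiliary facts
  have hzero : ∀ (g : E N → ℝ), (∀ y ∈ T, g y = 0) → ∀ x ∈ T, fderiv ℝ g x = 0 := by
    intro g hg x hx
    exact fderiv_zero_of_zero_nhds
      (Filter.eventually_of_mem (hT_open.mem_nhds hx) (fun y hy => hg y hy))
  have hgc : ∀ (g : E N → ℝ), ContDiff ℝ (⊤ : ℕ∞) g → Continuous (fun x => gradSq g x) := by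
    intro g hg
    have h := hg.continuous_fderiv (by simp)
    exact continuous_finset_sum _ fun i _ => ((h.clm_apply continuous_const).norm.pow 2)
  have hgz : ∀ (g : E N → ℝ), (∀ y ∈ T, g y = 0) → ∀ x ∈ T, gradSq g x = 0 := by
    intro g hg x hx
    rw [gradSq_eq]
    simp [hzero g hg x hx]
  -- integrability
  have hIf : Integrable (fun x => gradSq f x) := by
    refine (hgc f hf).integrable_of_hasCompactSupport (hcs_of_subset hcs ?_)
    intro x hx
    by_contra hxT
    exact hx (hgz f hfT x hxT)
  have hIA : Integrable (fun x => wf β x ^ 2 * gradSq v x) := by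
    refine Continuous.integrable_of_hasCompactSupport ?_ (hcs_of_subset hcs ?_)
    · refine continuous_glue isOpen_S hT_open hST (fun x hx => ?_) (fun y hy => ?_)
      · exact (((contDiffAt_wf β hx).continuousAt.pow 2).mul ((hgc v hv_cd).continuousAt))
      · simp [hgz v hvT y hy]
    · intro x hx
      by_contra hxT
      exact hx (by simp [hgz v hvT x hxT])
  have hIB : ∀ i, Integrable (fun x => fderiv ℝ (X i) x (e i)) := by
    intro i
    refine Continuous.integrable_of_hasCompactSupport
      ((((hX_cd i).continuous_fderiv (by simp)).clm_apply continuous_const))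
      (hcs_of_subset hcs ?_)
    intro x hx
    by_contra hxT
    exact hx (by simp [hzero (X i) (hXT i) x hxT])
  have hID : Integrable (fun x => f x ^ 2 / ‖x‖ ^ 2) := by
    have h0T : (0 : E N) ∈ T := by
      intro h0
      have := hsupp h0
      exact this 0 rfl
    refine Continuous.integrable_of_hasCompactSupport ?_ (hcs_of_subset hcs ?_)
    · refine continuous_glue (U := {x : E N | x ≠ 0}) isOpen_compl_singleton hT_open
        (fun x => ?_) (fun x hx => ?_) (fun y hy => ?_)
      · by_cases h : x = 0
        · exact Or.inr (h ▸ h0T)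
        · exact Or.inl h
      · exact ((hf.continuous.continuousAt).pow 2).div
          ((continuous_norm.continuousAt).pow 2) (by simpa using hx)
      · simp [hfT y hy]
    · intro x hx
      by_contra hxT
      exact hx (by simp [hfT x hxT])
  have hIX : ∀ i, Integrable (X i) := by
    intro i
    refine Continuous.integrable_of_hasCompactSupport ((hX_cd i).continuous)
      (hcs_of_subset hcs ?_)
    intro x hx
    by_contra hxT
    exact hx (hXT i x hxT)
  have hIBP : ∀ i, ∫ x, fderiv ℝ (X i) x (e i) = 0 := by
    intro i
    have h := integral_mul_fderiv_eq_neg_fderiv_mul_of_integrable (μ := volume)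
      (f := X i) (g := fun _ => (1:ℝ)) (v := e i)
      (by simpa [mul_one] using hIB i)
      (by simp)
      (by simpa [mul_one] using hIX i)
      (fun x _ => (hX_cd i).differentiable (by simp) x) (fun x _ => differentiableAt_const (1:ℝ))
    simp only [fderiv_fun_const, Pi.zero_apply, ContinuousLinearMap.zero_apply, mul_zero,
      mul_one, integral_zero] at h
    linarith [h]
  -- assemble
  have hsplit : ∫ x, gradSq f x
      = (∫ x, wf β x ^ 2 * gradSq v x) + (∑ i, ∫ x, fderiv ℝ (X i) x (e i))
        + β ^ 2 * ∫ x, f x ^ 2 / ‖x‖ ^ 2 := by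
    simp_rw [hkey]
    have I1 : Integrable (fun x => wf β x ^ 2 * gradSq v x
        + ∑ i, fderiv ℝ (X i) x (e i)) volume :=
      hIA.add (integrable_finset_sum _ (fun i _ => hIB i))
    have I2 : Integrable (fun x : E N => β ^ 2 * (f x ^ 2 / ‖x‖ ^ 2)) volume :=
      hID.const_mul _
    rw [integral_add I1 I2, integral_add hIA (integrable_finset_sum _ (fun i _ => hIB i)),
      integral_finset_sum _ (fun i _ => hIB i), MeasureTheory.integral_const_mul]
  have hBzero : (∑ i, ∫ x, fderiv ℝ (X i) x (e i)) = 0 :=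
    Finset.sum_eq_zero fun i _ => hIBP i
  have hAnn : 0 ≤ ∫ x, wf β x ^ 2 * gradSq v x := by
    refine integral_nonneg fun x => ?_
    exact mul_nonneg (sq_nonneg _) (Finset.sum_nonneg fun i _ => sq_nonneg _)
  rw [hsplit, hBzero]
  linarith [hAnn]

end Hardy15

namespace Hardy15
variable {N : ℕ}

lemma support_fderiv_subset' {α : Type} [NormedAddCommGroup α] [NormedSpace ℝ α]
    (g : E N → α) {x : E N} (hx : x ∉ tsupport g) : fderiv ℝ g x = 0 :=
  fderiv_zero_of_zero_nhds (Filter.eventually_of_mem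
    ((isClosed_tsupport g).isOpen_compl.mem_nhds hx)
    (fun y hy => image_eq_zero_of_notMem_tsupport hy))

lemma integrable_gradSq (g : E N → ℝ) (hg : ContDiff ℝ (⊤ : ℕ∞) g) (hcs : HasCompactSupport g) :
    Integrable (fun x => gradSq g x) := by
  refine Continuous.integrable_of_hasCompactSupport
    (continuous_finset_sum _ fun i _ =>
      (((hg.continuous_fderiv (by simp)).clm_apply continuous_const).norm.pow 2))
    (hcs_of_subset hcs ?_)
  intro x hx
  by_contra hxT
  refine hx ?_
  show gradSq g x = 0
  rw [gradSq_eq]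
  simp [support_fderiv_subset' g hxT]

lemma integrable_sq_div (g : E N → ℝ) (hg : ContDiff ℝ (⊤ : ℕ∞) g) (hcs : HasCompactSupport g)
    (h0 : (0 : E N) ∉ tsupport g) : Integrable (fun x => g x ^ 2 / ‖x‖ ^ 2) := by
  have hT_open : IsOpen (tsupport g)ᶜ := (isClosed_tsupport g).isOpen_compl
  refine Continuous.integrable_of_hasCompactSupport ?_ (hcs_of_subset hcs ?_)
  · refine continuous_glue (U := {x : E N | x ≠ 0}) isOpen_compl_singleton hT_open
      (fun x => ?_) (fun x hx => ?_) (fun y hy => ?_)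
    · by_cases h : x = 0
      · exact Or.inr (h ▸ h0)
      · exact Or.inl h
    · exact ((hg.continuous.continuousAt).pow 2).div
        ((continuous_norm.continuousAt).pow 2) (by simpa using hx)
    · simp [image_eq_zero_of_notMem_tsupport hy]
  · intro x hx
    by_contra hxT
    exact hx (by simp [image_eq_zero_of_notMem_tsupport hxT])

theorem stmt15' (N : ℕ) (hN : 2 ≤ N) (k : ℝ) (hk : -((3 * (N : ℝ) - 2)/2) ^ 2 ≤ k)
    (u : EuclideanSpace ℝ (Fin N) → ℂ)
    (hu : ContDiff ℝ (⊤ : ℕ∞) u) (hcs : HasCompactSupport u)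
    (hsupp : tsupport u ⊆ ({x : EuclideanSpace ℝ (Fin N) | ∃ i : Fin N, x i = 0})ᶜ) :
    0 ≤ (∫ x, gradSq u x) + k * ∫ x, ‖u x‖ ^ 2 / ‖x‖ ^ 2 := by
  haveI : NeZero N := ⟨by omega⟩
  have hScompl : ({x : EuclideanSpace ℝ (Fin N) | ∃ i : Fin N, x i = 0})ᶜ = Sset N := by
    ext x
    simp [Sset]
  rw [hScompl] at hsupp
  set u1 : E N → ℝ := fun x => (u x).re with hu1def
  set u2 : E N → ℝ := fun x => (u x).im with hu2def
  have hu1 : ContDiff ℝ (⊤ : ℕ∞) u1 := (Complex.reCLM.contDiff).comp hu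
  have hu2 : ContDiff ℝ (⊤ : ℕ∞) u2 := (Complex.imCLM.contDiff).comp hu
  have hsupp1 : Function.support u1 ⊆ Function.support u := by
    intro x hx
    simp only [Function.mem_support] at hx ⊢
    intro h; rw [hu1def] at hx; simp [h] at hx
  have hsupp2 : Function.support u2 ⊆ Function.support u := by
    intro x hx
    simp only [Function.mem_support] at hx ⊢
    intro h; rw [hu2def] at hx; simp [h] at hx
  have hts1 : tsupport u1 ⊆ tsupport u := closure_mono hsupp1
  have hts2 : tsupport u2 ⊆ tsupport u := closure_mono hsupp2
  have hcs1 : HasCompactSupport u1 :=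
    IsCompact.of_isClosed_subset hcs (isClosed_tsupport _) hts1
  have hcs2 : HasCompactSupport u2 :=
    IsCompact.of_isClosed_subset hcs (isClosed_tsupport _) hts2
  -- pointwise gradSq split
  have hgs : ∀ x, gradSq u x = gradSq u1 x + gradSq u2 x := by
    intro x
    have hdu : DifferentiableAt ℝ u x := (hu.differentiable (by simp)) x
    have h1 : fderiv ℝ u1 x = Complex.reCLM.comp (fderiv ℝ u x) :=
      (Complex.reCLM.hasFDerivAt.comp x hdu.hasFDerivAt).fderiv
    have h2 : fderiv ℝ u2 x = Complex.imCLM.comp (fderiv ℝ u x) :=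
      (Complex.imCLM.hasFDerivAt.comp x hdu.hasFDerivAt).fderiv
    rw [gradSq_eq, gradSq_eq, gradSq_eq, ← Finset.sum_add_distrib]
    refine Finset.sum_congr rfl fun i _ => ?_
    rw [h1, h2]
    simp only [ContinuousLinearMap.coe_comp', Function.comp_apply,
      Complex.reCLM_apply, Complex.imCLM_apply]
    rw [Complex.sq_norm, Complex.normSq_apply,
      Real.norm_eq_abs, sq_abs, Real.norm_eq_abs, sq_abs]
    ring
  have hnrm : ∀ x : E N, ‖u x‖ ^ 2 / ‖x‖ ^ 2 = u1 x ^ 2 / ‖x‖ ^ 2 + u2 x ^ 2 / ‖x‖ ^ 2 := by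
    intro x
    rw [← add_div, Complex.sq_norm, Complex.normSq_apply]
    rw [hu1def, hu2def]
    ring_nf
  have h0T : (0 : E N) ∉ tsupport u := by
    intro h0
    exact (hsupp h0) 0 rfl
  -- integrals split
  have hI1 : Integrable (fun x => gradSq u1 x) := integrable_gradSq u1 hu1 hcs1
  have hI2 : Integrable (fun x => gradSq u2 x) := integrable_gradSq u2 hu2 hcs2
  have hID1 : Integrable (fun x => u1 x ^ 2 / ‖x‖ ^ 2) :=
    integrable_sq_div u1 hu1 hcs1 (fun h => h0T (hts1 h))
  have hID2 : Integrable (fun x => u2 x ^ 2 / ‖x‖ ^ 2) :=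
    integrable_sq_div u2 hu2 hcs2 (fun h => h0T (hts2 h))
  have hsg : ∫ x, gradSq u x = (∫ x, gradSq u1 x) + ∫ x, gradSq u2 x := by
    simp_rw [hgs]
    exact integral_add hI1 hI2
  have hsn : ∫ x, ‖u x‖ ^ 2 / ‖x‖ ^ 2
      = (∫ x, u1 x ^ 2 / ‖x‖ ^ 2) + ∫ x, u2 x ^ 2 / ‖x‖ ^ 2 := by
    simp_rw [hnrm]
    exact integral_add hID1 hID2
  have K1 := key N hN u1 hu1 hcs1 (hts1.trans hsupp)
  have K2 := key N hN u2 hu2 hcs2 (hts2.trans hsupp)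
  have hD1 : 0 ≤ ∫ x, u1 x ^ 2 / ‖x‖ ^ 2 := integral_nonneg fun x => by positivity
  have hD2 : 0 ≤ ∫ x, u2 x ^ 2 / ‖x‖ ^ 2 := integral_nonneg fun x => by positivity
  rw [hsg, hsn]
  set C : ℝ := ((3 * (N : ℝ) - 2)/2) ^ 2 with hC
  have hmul : (-C) * ((∫ x, u1 x ^ 2 / ‖x‖ ^ 2) + ∫ x, u2 x ^ 2 / ‖x‖ ^ 2)
      ≤ k * ((∫ x, u1 x ^ 2 / ‖x‖ ^ 2) + ∫ x, u2 x ^ 2 / ‖x‖ ^ 2) :=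
    mul_le_mul_of_nonneg_right hk (by linarith)
  nlinarith [K1, K2, hmul]

end Hardy15

theorem stmt15 (N : ℕ) (hN : 2 ≤ N) (k : ℝ) (hk : -((3 * (N : ℝ) - 2)/2) ^ 2 ≤ k)
    (u : EuclideanSpace ℝ (Fin N) → ℂ)
    (hu : ContDiff ℝ (⊤ : ℕ∞) u) (hcs : HasCompactSupport u)
    (hsupp : tsupport u ⊆ ({x : EuclideanSpace ℝ (Fin N) | ∃ i : Fin N, x i = 0})ᶜ) :
    0 ≤ (∫ x, gradSq u x) + k * ∫ x, ‖u x‖ ^ 2 / ‖x‖ ^ 2 :=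
  Hardy15.stmt15' N hN k hk u hu hcs hsupp
end
end
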